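/- arXiv:1508.06345 — 8 statements merged into one kernel-verified Lean document; each statement's English description precedes it below -/
import Mathlib

section
/- Let ŝ₁ : 𝒞 → 𝒞 be a lift of s₁ ∈ S consistent with chain structure and ŝ₂ : 𝒞 → 𝒞 be a lift of s₂ ∈ S consistent with chain structure. Then the composite map C ↦ ŝ₂(ŝ₁(C)) is a lift of the product s₁s₂ and is consistent with chain structure. -/
namespace Holonomy

variable {X : Type*}

/-- The extended image set `I = {X·s : s ∈ S} ∪ {X} ∪ {{x} : x ∈ X}`,
with the state set taken to be `Set.univ`. -/
def extImgs (S : Set (X → X)) : Set (Set X) :=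
  {P : Set X | ∃ s ∈ S, P = s '' (Set.univ : Set X)} ∪ {(Set.univ : Set X)} ∪
    {P : Set X | ∃ x : X, P = {x}}

/-- `C` is a maximal chain (w.r.t. inclusion) inside the family `I`. -/
def IsMaxChainIn (I : Set (Set X)) (C : Set (Set X)) : Prop :=
  C ⊆ I ∧ IsChain (· ⊆ ·) C ∧
    ∀ D : Set (Set X), D ⊆ I → IsChain (· ⊆ ·) D → C ⊆ D → D = C

/-- `𝒞`, the maximal chains in the extended image set. -/
def MaxChain (S : Set (X → X)) : Type _ :=
  {C : Set (Set X) // IsMaxChainIn (extImgs S) C}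

/-- The action of `s` on a chain, `C·s = {P·s : P ∈ C}`. -/
def chainAct (C : Set (Set X)) (s : X → X) : Set (Set X) :=
  (fun P => s '' P) '' C

/-- Chains `C` and `D` agree down to `P`. -/
def AgreeDownTo (C D : Set (Set X)) (P : Set X) : Prop :=
  P ∈ C ∧ P ∈ D ∧ ∀ Q : Set X, P ⊆ Q → (Q ∈ C ↔ Q ∈ D)

/-- `sh : 𝒞 → 𝒞` is a lift of `s`: `C·s ⊆ sh C` for every maximal chain `C`. -/
def IsLift (S : Set (X → X)) (s : X → X) (sh : MaxChain S → MaxChain S) : Prop :=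
  ∀ C : MaxChain S, chainAct C.val s ⊆ (sh C).val

/-- `sh` is consistent with chain structure. -/
def Consistent (S : Set (X → X)) (s : X → X) (sh : MaxChain S → MaxChain S) : Prop :=
  ∀ (C C' : MaxChain S) (P : Set X),
    AgreeDownTo C.val C'.val P → AgreeDownTo (sh C).val (sh C').val (s '' P)

/-- Product of a list of transformations, in left-to-right (right-action) order:
`prodList [a₁,…,a_k] = a₁⋯a_k`, i.e. `x ↦ a_k (⋯ (a₁ x))`. -/
def prodList {α : Type*} (l : List (α → α)) : α → α :=
  fun x => l.foldl (fun y f => f y) x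

/-- Subduction: `P ⊆_S Q` iff `P ⊆ Q·s` for some `s ∈ S¹ = S ∪ {id}`. -/
def Subduction (S : Set (X → X)) (P Q : Set X) : Prop :=
  ∃ s ∈ insert (id : X → X) S, P ⊆ s '' Q

/-- `P ≡_S Q`. -/
def SubEquiv (S : Set (X → X)) (P Q : Set X) : Prop :=
  Subduction S P Q ∧ Subduction S Q P

/-- Strict subduction `P ⊂_S Q`. -/
def SSubduction (S : Set (X → X)) (P Q : Set X) : Prop :=
  Subduction S P Q ∧ ¬ Subduction S Q P

/-- `P` is not a singleton. -/
def nonSingleton (P : Set X) : Prop := ¬ ∃ x : X, P = {x}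

/-- The height of `Q`: the largest length of a strict subduction chain of
non-singleton members of `I` ending at `Q` (`0` for singletons, since then no
such chain exists). -/
noncomputable def height (S : Set (X → X)) (Q : Set X) : ℕ :=
  sSup {n : ℕ | ∃ l : List (Set X), l.length = n ∧
    (∀ R ∈ l, R ∈ extImgs S ∧ nonSingleton R) ∧
    l.Chain' (SSubduction S) ∧ l.getLast? = some Q}

/-- Depth: `d(Q) = h(X) - h(Q) + 1`. -/
noncomputable def depth (S : Set (X → X)) (Q : Set X) : ℕ :=
  height S (Set.univ : Set X) - height S Q + 1

/-- The tiles of `P`: maximal elements (w.r.t. inclusion) of `{Q ∈ I : Q ⊊ P}`. -/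
def tiles (S : Set (X → X)) (P : Set X) : Set (Set X) :=
  {Q | (Q ∈ extImgs S ∧ Q ⊂ P) ∧ ∀ R : Set X, R ∈ extImgs S → R ⊂ P → Q ⊆ R → Q = R}

/-- The permutator group `G_P` of `P`, as a set of permutations of `P`. -/
def permutator (S : Set (X → X)) (P : Set X) : Set (Equiv.Perm ↥P) :=
  {σ | ∃ s ∈ S, s '' P = P ∧ ∀ p : ↥P, (σ p : X) = s (p : X)}

/-- The holonomy group `H_P` of `P`, as a set of permutations of `tiles P`. -/
def holonomyGroup (S : Set (X → X)) (P : Set X) : Set (Equiv.Perm ↥(tiles S P)) :=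
  {σ | ∃ s ∈ S, s '' P = P ∧ ∀ T : ↥(tiles S P), ((σ T : Set X) : Set X) = s '' ((T : Set X) : Set X)}



/-- The state of approximation at level `i` of the positioned chain of a maximal
chain `C`: `α_1 = X`, and for `i > 1`, `α_i` is the entry of the positioned chain
at the largest filled position `j < i`.  Since position `d(P)` of the positioned
chain of `C : X = P₁ ⊋ ⋯ ⊋ P_k` holds the successor of `P` for each non-minimal
member `P`, `α_i` is the smallest member of `C` whose immediate predecessor in
`C` has depth `< i`. -/
noncomputable def alpha (S : Set (X → X)) (C : Set (Set X)) (i : ℕ) : Set X :=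
  if i ≤ 1 then Set.univ
  else ⋂₀ {Q | Q ∈ C ∧ ∀ P : Set X,
    (P ∈ C ∧ Q ⊂ P ∧ ∀ R ∈ C, Q ⊂ R → P ⊆ R) → depth S P < i}

/-- The chosen equivalence-class representatives of depth `i`. -/
def RepsAt (S : Set (X → X)) (rep : Set X → Set X) (i : ℕ) : Set (Set X) :=
  {R | R ∈ extImgs S ∧ nonSingleton R ∧ rep R = R ∧ depth S R = i}

/-- States of the `i`-th holonomy component `ℋ_i`:
`none` is the extra state `*`, and `some (R, T)` is the tile `T` in the copy of
`tiles(R)` in the disjoint union, for `R` a representative of depth `i`. -/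
def ValidAt (S : Set (X → X)) (rep : Set X → Set X) (i : ℕ)
    (t : Option (Set X × Set X)) : Prop :=
  t = none ∨ ∃ R T : Set X, t = some (R, T) ∧ R ∈ RepsAt S rep i ∧ T ∈ tiles S R

/-- Transformations of the `i`-th holonomy component `ℋ_i` (on its state set):
either a constant map to a state of `ℋ_i`, or an element `(h₁,…,h_k)` of
`H_{R₁} × ⋯ × H_{R_k}` acting on the copy of `tiles(R_j)` by `h_j` (that is, by
`T ↦ T·s` for some `s` stabilizing `R_j`) and fixing `*`. -/
def IsHolTrans (S : Set (X → X)) (rep : Set X → Set X) (i : ℕ)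
    (φ : Option (Set X × Set X) → Option (Set X × Set X)) : Prop :=
  (∃ t₀, ValidAt S rep i t₀ ∧ ∀ t, ValidAt S rep i t → φ t = t₀) ∨
  (φ none = none ∧ ∀ R ∈ RepsAt S rep i, ∃ s ∈ S, s '' R = R ∧
    ∀ T ∈ tiles S R, φ (some (R, T)) = some (R, s '' T))

/-- `F` is an element of the wreath product `ℋ₁ ≀ ⋯ ≀ ℋ_d` of the holonomy
components: the action on each coordinate `i` depends only on the coordinates
above it (through a dependency function), and on every valid state this
component action is a transformation of `ℋ_i`. -/
def IsCascade (S : Set (X → X)) (rep : Set X → Set X) (d : ℕ)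
    (F : (Fin d → Option (Set X × Set X)) → (Fin d → Option (Set X × Set X))) : Prop :=
  ∀ i : Fin d, ∃ g : (Fin d → Option (Set X × Set X)) →
      (Option (Set X × Set X) → Option (Set X × Set X)),
    (∀ t, F t i = g t (t i)) ∧
    (∀ t t', (∀ j : Fin d, j < i → t j = t' j) → g t = g t') ∧
    (∀ t, (∀ j : Fin d, ValidAt S rep (j.val + 1) (t j)) →
      IsHolTrans S rep (i.val + 1) (g t))

theorem chainAct_comp (C : Set (Set X)) (s₁ s₂ : X → X) :
    chainAct C (fun x => s₂ (s₁ x)) = chainAct (chainAct C s₁) s₂ := by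
  simp only [chainAct, Set.image_image]

theorem IsLift.comp {S : Set (X → X)} {s₁ s₂ : X → X} {sh₁ sh₂ : MaxChain S → MaxChain S}
    (h₁ : IsLift S s₁ sh₁) (h₂ : IsLift S s₂ sh₂) :
    IsLift S (fun x => s₂ (s₁ x)) (fun C => sh₂ (sh₁ C)) := fun C => by
  rw [chainAct_comp]
  exact (Set.image_mono (h₁ C)).trans (h₂ (sh₁ C))

theorem Consistent.comp {S : Set (X → X)} {s₁ s₂ : X → X} {sh₁ sh₂ : MaxChain S → MaxChain S}
    (h₁ : Consistent S s₁ sh₁) (h₂ : Consistent S s₂ sh₂) :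
    Consistent S (fun x => s₂ (s₁ x)) (fun C => sh₂ (sh₁ C)) := fun C C' P hP => by
  rw [← Set.image_image]
  exact h₂ _ _ _ (h₁ C C' P hP)

theorem composite_lift_isLift_and_consistent_general {X : Type*}
    (S : Set (X → X))
    (s₁ s₂ : X → X)
    (sh₁ sh₂ : MaxChain S → MaxChain S)
    (h₁lift : IsLift S s₁ sh₁) (h₁cons : Consistent S s₁ sh₁)
    (h₂lift : IsLift S s₂ sh₂) (h₂cons : Consistent S s₂ sh₂) :
    IsLift S (fun x => s₂ (s₁ x)) (fun C => sh₂ (sh₁ C)) ∧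
    Consistent S (fun x => s₂ (s₁ x)) (fun C => sh₂ (sh₁ C)) :=
  ⟨h₁lift.comp h₂lift, h₁cons.comp h₂cons⟩

/-- the composite of consistent lifts `sh₁` of `s₁` and `sh₂` of `s₂`
is a lift of the product `s₁s₂` and is consistent with chain structure. -/
theorem composite_lift_isLift_and_consistent {X : Type*} [Fintype X] [Nonempty X]
    (S : Set (X → X)) (hS : ∀ s ∈ S, ∀ t ∈ S, (fun x => t (s x)) ∈ S)
    (s₁ s₂ : X → X) (hs₁ : s₁ ∈ S) (hs₂ : s₂ ∈ S)
    (sh₁ sh₂ : MaxChain S → MaxChain S)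
    (h₁lift : IsLift S s₁ sh₁) (h₁cons : Consistent S s₁ sh₁)
    (h₂lift : IsLift S s₂ sh₂) (h₂cons : Consistent S s₂ sh₂) :
    IsLift S (fun x => s₂ (s₁ x)) (fun C => sh₂ (sh₁ C)) ∧
    Consistent S (fun x => s₂ (s₁ x)) (fun C => sh₂ (sh₁ C)) :=
  composite_lift_isLift_and_consistent_general S s₁ s₂ sh₁ sh₂ h₁lift h₁cons h₂lift h₂cons

end Holonomy
end

section
/- For every s ∈ S there exists a map ŝ : 𝒞 → 𝒞 that is a lift of s and is consistent with chain structure. -/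
namespace Holonomy

variable {X : Type*}

/-!
Complete `C·s` to a maximal chain greedily: scan a fixed enumeration of the subsets of `X` and
add each member of `I` that is comparable with everything collected so far. Once a chain contains
`Q`, whether a set `R ⊇ Q` gets added depends only on the members above `Q`, because the members
below `Q` lie below `R` anyway; so the part of the completion above `Q` is determined by the part
of the input above `Q`. Since `s` is monotone on subsets, the part of `C·s` above `P·s` is the
image of the part of `C` above `P`, which gives consistency.
-/

open Set

section Greedy

variable {α : Type*} [PartialOrder α] {I M M' : Set α} {Q₀ R : α}

open Classical in
noncomputable def greedyStep (I M : Set α) (R : α) : Set α :=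
  if R ∈ I ∧ ∀ Q ∈ M, R ≤ Q ∨ Q ≤ R then insert R M else M

noncomputable def greedyComplete (I : Set α) (l : List α) (M : Set α) : Set α :=
  l.foldl (greedyStep I) M

lemma subset_greedyStep : M ⊆ greedyStep I M R := by
  unfold greedyStep; split_ifs
  exacts [subset_insert _ _, subset_rfl]

lemma greedyStep_subset (hM : M ⊆ I) : greedyStep I M R ⊆ I := by
  unfold greedyStep; split_ifs with h
  exacts [insert_subset h.1 hM, hM]

lemma isChain_greedyStep (hM : IsChain (· ≤ ·) M) : IsChain (· ≤ ·) (greedyStep I M R) := by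
  unfold greedyStep; split_ifs with h
  exacts [hM.insert fun Q hQ _ => h.2 Q hQ, hM]

lemma greedyStep_inter_Ici_of_not_le (hR : ¬ Q₀ ≤ R) :
    greedyStep I M R ∩ Ici Q₀ = M ∩ Ici Q₀ := by
  unfold greedyStep; split_ifs
  exacts [insert_inter_of_notMem (mt mem_Ici.1 hR), rfl]

lemma greedyStep_inter_Ici (hM : IsChain (· ≤ ·) M) (h₀ : Q₀ ∈ M) :
    greedyStep I M R ∩ Ici Q₀ = greedyStep I (M ∩ Ici Q₀) R ∩ Ici Q₀ := by
  by_cases hR : Q₀ ≤ R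
  · have hcomp : (∀ Q ∈ M, R ≤ Q ∨ Q ≤ R) ↔ ∀ Q ∈ M ∩ Ici Q₀, R ≤ Q ∨ Q ≤ R := by
      refine ⟨fun h Q hQ => h Q hQ.1, fun h Q hQ => ?_⟩
      by_cases hQ₀ : Q₀ ≤ Q
      · exact h Q ⟨hQ, hQ₀⟩
      · exact Or.inr ((hM.total hQ h₀).resolve_right hQ₀ |>.trans hR)
    have hcond := and_congr_right' (a := R ∈ I) hcomp
    by_cases hc : R ∈ I ∧ ∀ Q ∈ M, R ≤ Q ∨ Q ≤ R
    · rw [greedyStep, greedyStep, if_pos hc, if_pos (hcond.1 hc),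
        insert_inter_of_mem (mem_Ici.2 hR), insert_inter_of_mem (mem_Ici.2 hR), inter_assoc,
        inter_self]
    · rw [greedyStep, greedyStep, if_neg hc, if_neg (mt hcond.2 hc), inter_assoc, inter_self]
  · rw [greedyStep_inter_Ici_of_not_le hR, greedyStep_inter_Ici_of_not_le hR, inter_assoc,
      inter_self]

lemma subset_greedyComplete (l : List α) (M : Set α) : M ⊆ greedyComplete I l M := by
  induction l generalizing M with
  | nil => exact subset_rfl
  | cons R l ih => exact subset_greedyStep.trans (ih _)

lemma greedyComplete_subset {l : List α} (hM : M ⊆ I) : greedyComplete I l M ⊆ I := by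
  induction l generalizing M with
  | nil => exact hM
  | cons R l ih => exact ih (greedyStep_subset hM)

lemma isChain_greedyComplete {l : List α} (hM : IsChain (· ≤ ·) M) :
    IsChain (· ≤ ·) (greedyComplete I l M) := by
  induction l generalizing M with
  | nil => exact hM
  | cons R l ih => exact ih (isChain_greedyStep hM)

lemma mem_greedyComplete {l : List α} (hl : R ∈ l) (hI : R ∈ I)
    (hcomp : ∀ Q ∈ greedyComplete I l M, R ≤ Q ∨ Q ≤ R) : R ∈ greedyComplete I l M := by
  induction l generalizing M with
  | nil => exact absurd hl List.not_mem_nil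
  | cons a l ih =>
    rcases List.mem_cons.1 hl with rfl | hl
    · have hstep : R ∈ greedyStep I M R := by
        rw [greedyStep, if_pos ⟨hI, fun Q hQ =>
          hcomp Q (subset_greedyComplete l _ (subset_greedyStep hQ))⟩]
        exact mem_insert _ _
      exact subset_greedyComplete l _ hstep
    · exact ih hl hcomp

lemma greedyComplete_inter_Ici_eq (l : List α) (hM : IsChain (· ≤ ·) M)
    (hM' : IsChain (· ≤ ·) M') (h₀ : Q₀ ∈ M) (h₀' : Q₀ ∈ M')
    (h : M ∩ Ici Q₀ = M' ∩ Ici Q₀) :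
    greedyComplete I l M ∩ Ici Q₀ = greedyComplete I l M' ∩ Ici Q₀ := by
  induction l generalizing M M' with
  | nil => exact h
  | cons R l ih =>
    refine ih (isChain_greedyStep hM) (isChain_greedyStep hM') (subset_greedyStep h₀)
      (subset_greedyStep h₀') ?_
    rw [greedyStep_inter_Ici hM h₀, greedyStep_inter_Ici hM' h₀', h]

end Greedy

lemma _root_.Monotone.image_inter_Ici_of_isChain {α β : Type*} [PartialOrder α] [PartialOrder β]
    {f : α → β} (hf : Monotone f) {C : Set α} (hC : IsChain (· ≤ ·) C) {P : α} (hP : P ∈ C) :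
    f '' C ∩ Ici (f P) = f '' (C ∩ Ici P) ∩ Ici (f P) := by
  refine Subset.antisymm ?_ (inter_subset_inter_left _ (image_mono inter_subset_left))
  rintro _ ⟨⟨Q, hQ, rfl⟩, hPQ⟩
  rcases hC.total hP hQ with hle | hle
  · exact ⟨⟨Q, ⟨hQ, hle⟩, rfl⟩, hPQ⟩
  · rw [le_antisymm (hf hle) hPQ]
    exact ⟨⟨P, ⟨hP, le_rfl⟩, rfl⟩, le_rfl⟩

lemma agreeDownTo_iff {C D : Set (Set X)} {P : Set X} :
    AgreeDownTo C D P ↔ P ∈ C ∧ P ∈ D ∧ C ∩ Ici P = D ∩ Ici P := by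
  simp only [AgreeDownTo, Set.ext_iff, mem_inter_iff, mem_Ici]
  refine and_congr_right' <| and_congr_right' <| forall_congr' fun Q => ?_
  by_cases hPQ : P ⊆ Q <;> simp [hPQ]

lemma isMaxChainIn_greedyComplete {I M : Set (Set X)} {l : List (Set X)} (hl : ∀ R ∈ I, R ∈ l)
    (hMI : M ⊆ I) (hM : IsChain (· ⊆ ·) M) : IsMaxChainIn I (greedyComplete I l M) :=
  ⟨greedyComplete_subset hMI, isChain_greedyComplete hM, fun _ hDI hD hsub =>
    (Subset.antisymm hsub fun R hR => mem_greedyComplete (hl R (hDI hR)) (hDI hR)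
      fun _ hQ => hD.total hR (hsub hQ)).symm⟩

lemma chainAct_subset_extImgs {S : Set (X → X)}
    (hS : ∀ s ∈ S, ∀ t ∈ S, (fun x => t (s x)) ∈ S) {s : X → X} (hs : s ∈ S)
    {C : Set (Set X)} (hC : C ⊆ extImgs S) : chainAct C s ⊆ extImgs S := by
  rintro _ ⟨P, hP, rfl⟩
  rcases hC hP with (⟨t, ht, rfl⟩ | rfl) | ⟨x, rfl⟩
  · exact Or.inl (Or.inl ⟨fun x => s (t x), hS t ht s hs, image_image s t univ⟩)
  · exact Or.inl (Or.inl ⟨s, hs, rfl⟩)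
  · exact Or.inr ⟨s x, image_singleton⟩

theorem exists_consistent_lift_general {X : Type*} [Fintype X]
    (S : Set (X → X)) (hS : ∀ s ∈ S, ∀ t ∈ S, (fun x => t (s x)) ∈ S)
    (s : X → X) (hs : s ∈ S) :
    ∃ sh : MaxChain S → MaxChain S, IsLift S s sh ∧ Consistent S s sh := by
  let complete := greedyComplete (extImgs S) (Finset.univ : Finset (Set X)).toList
  have hchain (C : MaxChain S) : IsChain (· ⊆ ·) (chainAct C.val s) :=
    monotone_image.isChain_image C.2.2.1
  have hmax (C : MaxChain S) : IsMaxChainIn (extImgs S) (complete (chainAct C.val s)) :=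
    isMaxChainIn_greedyComplete (fun R _ => Finset.mem_toList.2 (Finset.mem_univ R))
      (chainAct_subset_extImgs hS hs C.2.1) (hchain C)
  refine ⟨fun C => ⟨_, hmax C⟩, fun C => subset_greedyComplete _ _, ?_⟩
  intro C C' P hP
  obtain ⟨hPC, hPC', hup⟩ := agreeDownTo_iff.1 hP
  have hCs : chainAct C.val s ∩ Ici (s '' P) = chainAct C'.val s ∩ Ici (s '' P) := by
    rw [chainAct, chainAct, monotone_image.image_inter_Ici_of_isChain C.2.2.1 hPC, hup,
      ← monotone_image.image_inter_Ici_of_isChain C'.2.2.1 hPC']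
  have hsP {D : Set (Set X)} (h : P ∈ D) : s '' P ∈ chainAct D s := mem_image_of_mem _ h
  exact agreeDownTo_iff.2 ⟨subset_greedyComplete _ _ (hsP hPC),
    subset_greedyComplete _ _ (hsP hPC'),
    greedyComplete_inter_Ici_eq _ (hchain C) (hchain C') (hsP hPC) (hsP hPC') hCs⟩

/-- every `s ∈ S` has a lift to the maximal chains that is
consistent with chain structure. -/
theorem exists_consistent_lift {X : Type*} [Fintype X] [Nonempty X]
    (S : Set (X → X)) (hS : ∀ s ∈ S, ∀ t ∈ S, (fun x => t (s x)) ∈ S)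
    (s : X → X) (hs : s ∈ S) :
    ∃ sh : MaxChain S → MaxChain S, IsLift S s sh ∧ Consistent S s sh :=
  exists_consistent_lift_general S hS s hs

end Holonomy
end

section
/- Every element of a chain semigroup Ŝ is consistent with chain structure; more precisely, every element of Ŝ can be written as a composite â₁⋯â_k of generator lifts, and any such composite is a lift of the product a₁⋯a_k ∈ S that is consistent with chain structure. -/
namespace Holonomy

variable {X : Type*}

/-- The chain semigroup `Ŝ`, generated under composition by the chosen
consistent lifts of the generators `a ∈ A`. -/
def chainSg (S : Set (X → X)) (A : Set (X → X))
    (L : ↥A → MaxChain S → MaxChain S) : Set (MaxChain S → MaxChain S) :=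
  (Subsemigroup.closure
    (Set.range (fun a : ↥A => L a) : Set (Function.End (MaxChain S)))).carrier

section ProdList

variable {α : Type*}

theorem prodList_append (l₁ l₂ : List (α → α)) :
    prodList (l₁ ++ l₂) = prodList l₂ ∘ prodList l₁ := by
  funext x
  simp only [prodList, List.foldl_append, Function.comp_apply]

/-- In `Function.End` the product `f * g` is `f ∘ g`, so `prodList` reads the factors in
reverse order. -/
theorem exists_prodList_of_mem_closure {ι : Type*} {g : ι → α → α} {F : Function.End α}
    (hF : F ∈ Subsemigroup.closure (Set.range g : Set (Function.End α))) :
    ∃ l : List ι, l ≠ [] ∧ F = prodList (l.map g) := by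
  induction hF using Subsemigroup.closure_induction with
  | mem _ h =>
    obtain ⟨i, rfl⟩ := h
    exact ⟨[i], List.cons_ne_nil i [], rfl⟩
  | mul _ _ _ _ ihF ihG =>
    obtain ⟨lF, hlF, rfl⟩ := ihF
    obtain ⟨lG, -, rfl⟩ := ihG
    refine ⟨lG ++ lF, List.append_ne_nil_of_right_ne_nil lG hlF, ?_⟩
    rw [List.map_append, prodList_append]
    rfl

end ProdList

section Lifts

variable {S : Set (X → X)} {s t : X → X} {sh th : MaxChain S → MaxChain S}

theorem IsLift.id : IsLift S id id := by
  rintro C _ ⟨P, hP, rfl⟩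
  show _root_.id '' P ∈ C.val
  rwa [Set.image_id]

theorem Consistent.id : Consistent S id id := by
  intro C C' P hP
  rwa [Set.image_id]

theorem IsLift.comp_s2 (hs : IsLift S s sh) (ht : IsLift S t th) : IsLift S (t ∘ s) (th ∘ sh) := by
  rintro C _ ⟨P, hP, rfl⟩
  show (t ∘ s) '' P ∈ (th (sh C)).val
  rw [Set.image_comp]
  exact ht (sh C) ⟨s '' P, hs C ⟨P, hP, rfl⟩, rfl⟩

theorem Consistent.comp_s2 (hs : Consistent S s sh) (ht : Consistent S t th) :
    Consistent S (t ∘ s) (th ∘ sh) := by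
  intro C C' P hP
  rw [Set.image_comp]
  exact ht (sh C) (sh C') (s '' P) (hs C C' P hP)

variable {ι : Type*} {a : ι → X → X} {L : ι → MaxChain S → MaxChain S}

theorem IsLift.prodList_map (h : ∀ i, IsLift S (a i) (L i)) (l : List ι) :
    IsLift S (prodList (l.map a)) (prodList (l.map L)) := by
  induction l with
  | nil => exact IsLift.id
  | cons i l ih => exact (h i).comp_s2 ih

theorem Consistent.prodList_map (h : ∀ i, Consistent S (a i) (L i)) (l : List ι) :
    Consistent S (prodList (l.map a)) (prodList (l.map L)) := by
  induction l with
  | nil => exact Consistent.id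
  | cons i l ih => exact (h i).comp_s2 ih

end Lifts

theorem chain_semigroup_elements_consistent_general {X : Type*}
    (S : Set (X → X))
    (A : Set (X → X))
    (L : ↥A → MaxChain S → MaxChain S)
    (hL : ∀ a : ↥A, IsLift S a.val (L a) ∧ Consistent S a.val (L a)) :
    (∀ F ∈ chainSg S A L,
      ∃ l : List ↥A, l ≠ [] ∧ F = prodList (l.map L)) ∧
    (∀ l : List ↥A, l ≠ [] →
      IsLift S (prodList (l.map Subtype.val)) (prodList (l.map L)) ∧
      Consistent S (prodList (l.map Subtype.val)) (prodList (l.map L))) :=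
  ⟨fun _ hF => exists_prodList_of_mem_closure hF,
    fun l _ => ⟨IsLift.prodList_map (fun a => (hL a).1) l,
      Consistent.prodList_map (fun a => (hL a).2) l⟩⟩

/-- every element of the chain semigroup `Ŝ` is a composite
`â₁⋯â_k` of generator lifts, and any such composite is a lift of the product
`a₁⋯a_k ∈ S` which is consistent with chain structure. -/
theorem chain_semigroup_elements_consistent {X : Type*} [Fintype X] [Nonempty X]
    (S : Set (X → X)) (hS : ∀ s ∈ S, ∀ t ∈ S, (fun x => t (s x)) ∈ S)
    (A : Set (X → X)) (hA : A ⊆ S)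
    (hgen : ∀ s ∈ S, ∃ l : List ↥A, l ≠ [] ∧ s = prodList (l.map Subtype.val))
    (L : ↥A → MaxChain S → MaxChain S)
    (hL : ∀ a : ↥A, IsLift S a.val (L a) ∧ Consistent S a.val (L a)) :
    (∀ F ∈ chainSg S A L,
      ∃ l : List ↥A, l ≠ [] ∧ F = prodList (l.map L)) ∧
    (∀ l : List ↥A, l ≠ [] →
      IsLift S (prodList (l.map Subtype.val)) (prodList (l.map L)) ∧
      Consistent S (prodList (l.map Subtype.val)) (prodList (l.map L))) :=
  chain_semigroup_elements_consistent_general S A L hL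

end Holonomy
end

section
/- There is a surjective morphism of transformation semigroups from the chain semigroup (𝒞, Ŝ) onto (X,S): the map η : 𝒞 → X, sending each maximal chain C to the element x of the unique singleton {x} ∈ C, is surjective; there exists a (necessarily surjective) semigroup homomorphism θ : Ŝ → S with θ(â) = a for every generator a ∈ A; and η(ŝ(C)) = η(C)·θ(ŝ) for all ŝ ∈ Ŝ and all C ∈ 𝒞. -/
namespace Holonomy

variable {X : Type*}

section ChainAux

variable {X : Type*} [Fintype X] [Nonempty X]

lemma nonempty_of_mem_extImgs {S : Set (X → X)} {P : Set X}
    (hP : P ∈ extImgs S) : P.Nonempty := by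
  rcases hP with (hP | hP) | hP
  · obtain ⟨s, _, rfl⟩ := hP
    exact Set.univ_nonempty.image s
  · rw [Set.mem_singleton_iff] at hP; subst hP; exact Set.univ_nonempty
  · obtain ⟨x, rfl⟩ := hP; exact Set.singleton_nonempty x

lemma singleton_mem_extImgs (S : Set (X → X)) (x : X) : ({x} : Set X) ∈ extImgs S :=
  Or.inr ⟨x, rfl⟩

lemma univ_mem_extImgs (S : Set (X → X)) : (Set.univ : Set X) ∈ extImgs S :=
  Or.inl (Or.inr rfl)

lemma exists_maxChainIn_superset {I : Set (Set X)} {C₀ : Set (Set X)}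
    (h₀ : C₀ ⊆ I) (hc : IsChain (· ⊆ ·) C₀) :
    ∃ M, IsMaxChainIn I M ∧ C₀ ⊆ M := by
  classical
  set T : Set (Set (Set X)) := {D | D ⊆ I ∧ IsChain (· ⊆ ·) D ∧ C₀ ⊆ D} with hT
  have hCT : C₀ ∈ T := ⟨h₀, hc, subset_rfl⟩
  obtain ⟨M, hM, hmax⟩ :=
    Set.Finite.exists_maximalFor id T (Set.toFinite T) ⟨C₀, hCT⟩
  refine ⟨M, ⟨hM.1, hM.2.1, ?_⟩, hM.2.2⟩
  intro D hDI hDc hMD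
  have hDT : D ∈ T := ⟨hDI, hDc, hM.2.2.trans hMD⟩
  exact le_antisymm (hmax hDT hMD) hMD

lemma mem_of_maxChainIn {I : Set (Set X)} {C : Set (Set X)}
    (hC : IsMaxChainIn I C) {P : Set X} (hPI : P ∈ I)
    (hcomp : ∀ Q ∈ C, P ≠ Q → P ⊆ Q ∨ Q ⊆ P) : P ∈ C := by
  have hchain : IsChain (· ⊆ ·) (insert P C) := hC.2.1.insert hcomp
  have hsub : insert P C ⊆ I := Set.insert_subset hPI hC.1
  have := hC.2.2 (insert P C) hsub hchain (Set.subset_insert P C)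
  rw [← this]
  exact Set.mem_insert P C

lemma exists_singleton_mem {S : Set (X → X)} {C : Set (Set X)}
    (hC : IsMaxChainIn (extImgs S) C) : ∃ x : X, ({x} : Set X) ∈ C := by
  classical
  have huniv : (Set.univ : Set X) ∈ C :=
    mem_of_maxChainIn hC (univ_mem_extImgs S)
      (fun Q _ _ => Or.inr (Set.subset_univ Q))
  obtain ⟨P₀, hP₀, hmin⟩ :=
    Set.Finite.exists_minimalFor id C (Set.toFinite C) ⟨_, huniv⟩
  have hleast : ∀ Q ∈ C, P₀ ⊆ Q := by
    intro Q hQ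
    rcases eq_or_ne Q P₀ with rfl | hne
    · exact subset_rfl
    rcases hC.2.1 hQ hP₀ hne with h1 | h1
    · exact hmin hQ h1
    · exact h1
  obtain ⟨x, hx⟩ := nonempty_of_mem_extImgs (hC.1 hP₀)
  refine ⟨x, mem_of_maxChainIn hC (singleton_mem_extImgs S x) ?_⟩
  intro Q hQ _
  exact Or.inl ((Set.singleton_subset_iff.mpr hx).trans (hleast Q hQ))

lemma singleton_eq_of_chain {C : Set (Set X)} (hC : IsChain (· ⊆ ·) C)
    {x y : X} (hx : ({x} : Set X) ∈ C) (hy : ({y} : Set X) ∈ C) : x = y := by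
  rcases eq_or_ne ({x} : Set X) {y} with h | h
  · exact Set.singleton_eq_singleton_iff.mp h
  rcases hC hx hy h with h1 | h1
  · simpa using h1
  · exact (by simpa using h1 : y = x).symm

end ChainAux

/-- the chain semigroup `(𝒞, Ŝ)` maps onto `(X,S)` by a surjective
morphism of transformation semigroups: `η` picks the unique singleton of each
maximal chain and is surjective; `θ` is a (surjective) semigroup homomorphism
with `θ(â) = a` on generator lifts; and `η(ŝ(C)) = η(C)·θ(ŝ)`. -/
theorem chain_semigroup_surjective_morphism {X : Type*} [Fintype X] [Nonempty X]
    (S : Set (X → X)) (hS : ∀ s ∈ S, ∀ t ∈ S, (fun x => t (s x)) ∈ S)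
    (A : Set (X → X)) (hA : A ⊆ S)
    (hgen : ∀ s ∈ S, ∃ l : List ↥A, l ≠ [] ∧ s = prodList (l.map Subtype.val))
    (L : ↥A → MaxChain S → MaxChain S)
    (hL : ∀ a : ↥A, IsLift S a.val (L a) ∧ Consistent S a.val (L a)) :
    ∃ η : MaxChain S → X,
      (∀ C : MaxChain S, ({η C} : Set X) ∈ C.val) ∧
      Function.Surjective η ∧
      ∃ θ : (MaxChain S → MaxChain S) → (X → X),
        (∀ a : ↥A, θ (L a) = a.val) ∧
        (∀ F ∈ chainSg S A L, θ F ∈ S) ∧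
        (∀ s ∈ S, ∃ F ∈ chainSg S A L, θ F = s) ∧
        (∀ F ∈ chainSg S A L, ∀ G ∈ chainSg S A L,
          θ (fun C => G (F C)) = fun x => θ G (θ F x)) ∧
        (∀ F ∈ chainSg S A L, ∀ C : MaxChain S, η (F C) = θ F (η C)) := by
  classical
  have hex : ∀ C : MaxChain S, ∃ x : X, ({x} : Set X) ∈ C.val :=
    fun C => exists_singleton_mem C.prop
  set η : MaxChain S → X := fun C => Classical.choose (hex C) with hηdef
  have hηmem : ∀ C : MaxChain S, ({η C} : Set X) ∈ C.val :=
    fun C => Classical.choose_spec (hex C)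
  have hηchar : ∀ (C : MaxChain S) (x : X), ({x} : Set X) ∈ C.val → η C = x :=
    fun C x hx => singleton_eq_of_chain C.prop.2.1 (hηmem C) hx
  -- surjectivity of η
  have hsurj : Function.Surjective η := by
    intro x
    have hsub : ({({x} : Set X)} : Set (Set X)) ⊆ extImgs S := by
      intro P hP
      rw [Set.mem_singleton_iff] at hP
      subst hP
      exact singleton_mem_extImgs S x
    obtain ⟨M, hM, hM0⟩ := exists_maxChainIn_superset hsub
      (Set.subsingleton_singleton.isChain)
    exact ⟨⟨M, hM⟩, hηchar ⟨M, hM⟩ x (hM0 rfl)⟩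
  -- generator compatibility
  have hgenη : ∀ (a : ↥A) (C : MaxChain S), η (L a C) = a.val (η C) := by
    intro a C
    have h1 : (a.val '' {η C}) ∈ (L a C).val :=
      (hL a).1 C ⟨{η C}, hηmem C, rfl⟩
    rw [Set.image_singleton] at h1
    exact hηchar (L a C) _ h1
  -- word compatibility
  have hword : ∀ (l : List ↥A) (C : MaxChain S),
      η (prodList (l.map L) C) = prodList (l.map Subtype.val) (η C) := by
    intro l
    induction l with
    | nil => intro C; rfl
    | cons a l ih =>
      intro C
      have h1 : prodList ((a :: l).map L) C = prodList (l.map L) (L a C) := rfl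
      have h2 : prodList ((a :: l).map Subtype.val) (η C)
          = prodList (l.map Subtype.val) (a.val (η C)) := rfl
      rw [h1, ih, hgenη, h2]
  -- words give elements of the chain semigroup
  let e : ↥A → Function.End (MaxChain S) := fun a => L a
  let p : List ↥A → Function.End (MaxChain S) := fun l => prodList (l.map L)
  have hR : ∀ a : ↥A, e a ∈ Subsemigroup.closure (Set.range e) :=
    fun a => Subsemigroup.subset_closure ⟨a, rfl⟩
  have hmemSg : ∀ (l : List ↥A), l ≠ [] →
      p l ∈ Subsemigroup.closure (Set.range e) := by
    intro l
    induction l with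
    | nil => intro h; exact absurd rfl h
    | cons a l ih =>
      intro _
      rcases l with _ | ⟨b, l'⟩
      · exact hR a
      · exact Subsemigroup.mul_mem _ (ih (by simp)) (hR a)
  -- key property of chain semigroup elements
  have hK : ∀ F ∈ chainSg S A L, ∃ s ∈ S, ∀ C : MaxChain S, η (F C) = s (η C) := by
    let K : Subsemigroup (Function.End (MaxChain S)) :=
      { carrier := {F | ∃ s ∈ S, ∀ C : MaxChain S, η (F C) = s (η C)}
        mul_mem' := by
          rintro F G ⟨s, hs, hFs⟩ ⟨t, ht, hGt⟩
          refine ⟨fun x => s (t x), hS t ht s hs, fun C => ?_⟩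
          show η (F (G C)) = s (t (η C))
          rw [hFs, hGt] }
    intro F hF
    have hle : (Subsemigroup.closure
        (Set.range (fun a : ↥A => L a) : Set (Function.End (MaxChain S)))) ≤ K := by
      refine Subsemigroup.closure_le.mpr ?_
      rintro f ⟨a, rfl⟩
      exact ⟨a.val, hA a.prop, fun C => hgenη a C⟩
    exact hle hF
  -- the section of η and the homomorphism θ
  let sec : X → MaxChain S := Function.surjInv hsurj
  have hsec : ∀ x : X, η (sec x) = x := fun x => Function.surjInv_eq hsurj x
  refine ⟨η, hηmem, hsurj, fun F => fun x => η (F (sec x)), ?_, ?_, ?_, ?_, ?_⟩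
  · intro a
    funext x
    show η (L a (sec x)) = a.val x
    rw [hgenη, hsec]
  · intro F hF
    obtain ⟨s, hs, h⟩ := hK F hF
    have heq : (fun x => η (F (sec x))) = s := by
      funext x
      show η (F (sec x)) = s x
      rw [h, hsec]
    show (fun x => η (F (sec x))) ∈ S
    rw [heq]
    exact hs
  · intro s hs
    obtain ⟨l, hl, hseq⟩ := hgen s hs
    refine ⟨prodList (l.map L), hmemSg l hl, ?_⟩
    funext x
    show η (prodList (l.map L) (sec x)) = s x
    rw [hword, hsec, ← hseq]
  · intro F hF G hG
    obtain ⟨t, ht, hGt⟩ := hK G hG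
    funext x
    show η (G (F (sec x))) = η (G (sec (η (F (sec x)))))
    rw [hGt, hGt, hsec]
  · intro F hF C
    obtain ⟨s, hs, h⟩ := hK F hF
    show η (F C) = η (F (sec (η C)))
    rw [h, h, hsec]

end Holonomy
end

section
/- If P, Q ⊆ X and there exist s, t ∈ S¹ with P = Q·s and Q = P·t, then there exist m, m' ∈ S¹ such that m restricted to P is a bijection from P onto Q, m' restricted to Q is a bijection from Q onto P, p·m·m' = p for all p ∈ P, and q·m'·m = q for all q ∈ Q. -/
namespace Holonomy

variable {X : Type*}

/-! Since `P·ts = P` and `P` is finite, `ts` permutes `P`, so some power `(ts)^(n+1)` fixes `P`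
pointwise. Hence `t` maps `P` bijectively onto `Q = P·t`, with inverse `s(ts)^n` on `Q`, and both
maps lie in `S¹`. -/

section

open Set Function

theorem _root_.Set.Finite.exists_eqOn_iterate_succ_id {α : Type*} {f : α → α} {s : Set α}
    (hs : s.Finite) (hf : f '' s = s) : ∃ n, EqOn f^[n + 1] id s := by
  have hmaps : MapsTo f s s := fun x hx => hf ▸ mem_image_of_mem f hx
  have hbij : BijOn f s s :=
    (hs.surjOn_iff_bijOn_of_mapsTo hmaps).1 (fun x hx => by rwa [← hf] at hx)
  have : Finite s := hs.to_subtype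
  obtain ⟨_ | n, hn, hpow⟩ := (isOfFinOrder_of_finite (hbij.equiv f)).exists_pow_eq_one
  · exact absurd hn (lt_irrefl 0)
  refine ⟨n, fun x hx => ?_⟩
  have := congr_arg Subtype.val (Equiv.congr_fun hpow ⟨x, hx⟩)
  rwa [Equiv.Perm.coe_pow, Equiv.Perm.coe_one, BijOn.equiv, Equiv.coe_ofBijective,
    hmaps.coe_iterate_restrict] at this

theorem _root_.Set.Finite.exists_leftInvOn_iterate_comp {α : Type*} {s t : α → α} {P Q : Set α}
    (hP : P.Finite) (hPQ : P = s '' Q) (hQP : Q = t '' P) :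
    ∃ n, LeftInvOn ((s ∘ t)^[n] ∘ s) t P := by
  have hst : (s ∘ t) '' P = P := by rw [image_comp, ← hQP, ← hPQ]
  obtain ⟨n, hn⟩ := hP.exists_eqOn_iterate_succ_id hst
  exact ⟨n, fun x hx => by simpa only [comp_apply, iterate_succ_apply, id_eq] using hn hx⟩

end

section

variable {S : Set (X → X)}

theorem comp_mem_insert_id (hS : ∀ s ∈ S, ∀ t ∈ S, (fun x => t (s x)) ∈ S) {a b : X → X}
    (ha : a ∈ insert id S) (hb : b ∈ insert id S) : b ∘ a ∈ insert id S := by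
  rcases ha with rfl | ha
  · exact hb
  rcases hb with rfl | hb
  · exact Or.inr ha
  exact Or.inr (hS a ha b hb)

theorem iterate_mem_insert_id (hS : ∀ s ∈ S, ∀ t ∈ S, (fun x => t (s x)) ∈ S) {a : X → X}
    (ha : a ∈ insert id S) (n : ℕ) : a^[n] ∈ insert id S := by
  induction n with
  | zero => exact Or.inl rfl
  | succ n ih => exact Function.iterate_succ' a n ▸ comp_mem_insert_id hS ih ha

end

theorem exists_mutually_inverse_mappings_general {X : Type*} [Fintype X]
    (S : Set (X → X)) (hS : ∀ s ∈ S, ∀ t ∈ S, (fun x => t (s x)) ∈ S)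
    (P Q : Set X) (s t : X → X)
    (hs : s ∈ insert (id : X → X) S) (ht : t ∈ insert (id : X → X) S)
    (hPQ : P = s '' Q) (hQP : Q = t '' P) :
    ∃ m ∈ insert (id : X → X) S, ∃ m' ∈ insert (id : X → X) S,
      Set.BijOn m P Q ∧ Set.BijOn m' Q P ∧
      (∀ p ∈ P, m' (m p) = p) ∧ (∀ q ∈ Q, m (m' q) = q) := by
  obtain ⟨n, hleft⟩ := P.toFinite.exists_leftInvOn_iterate_comp hPQ hQP
  have hinv : Set.InvOn ((s ∘ t)^[n] ∘ s) t P Q := hQP ▸ ⟨hleft, hleft.rightInvOn_image⟩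
  have hbij : Set.BijOn t P Q := hQP ▸ hleft.injOn.bijOn_image
  refine ⟨t, ht, (s ∘ t)^[n] ∘ s, ?_, hbij, hbij.symm hinv.symm, hinv.1, hinv.2⟩
  exact comp_mem_insert_id hS hs (iterate_mem_insert_id hS (comp_mem_insert_id hS ht hs) n)

/-- mutually reachable subsets admit mutually inverse bijective
mappings between them inside `S¹`. -/
theorem exists_mutually_inverse_mappings {X : Type*} [Fintype X] [Nonempty X]
    (S : Set (X → X)) (hS : ∀ s ∈ S, ∀ t ∈ S, (fun x => t (s x)) ∈ S)
    (P Q : Set X) (s t : X → X)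
    (hs : s ∈ insert (id : X → X) S) (ht : t ∈ insert (id : X → X) S)
    (hPQ : P = s '' Q) (hQP : Q = t '' P) :
    ∃ m ∈ insert (id : X → X) S, ∃ m' ∈ insert (id : X → X) S,
      Set.BijOn m P Q ∧ Set.BijOn m' Q P ∧
      (∀ p ∈ P, m' (m p) = p) ∧ (∀ q ∈ Q, m (m' q) = q) :=
  exists_mutually_inverse_mappings_general S hS P Q s t hs ht hPQ hQP

end Holonomy
end

section
/- Let P be a non-singleton member of the extended image set I with S_P nonempty. For every s ∈ S_P and every tile T of P, T·s is again a tile of P, and the map T ↦ T·s is a permutation of tiles(P). Consequently the holonomy group H_P is a subgroup of Sym(tiles(P)), and the map sending the restriction s|_P ∈ G_P to the induced permutation of tiles(P) is a well-defined surjective group homomorphism from G_P onto H_P. -/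
namespace Holonomy

variable {X : Type*}

/-!
A transformation `s ∈ S` with `P·s = P` permutes the finite set `P`, so some iterate `s^[n]`,
`n > 0`, is the identity on `P` and `t = s^[2n-1] ∈ S` inverts `s` on `P`. Since `S` maps `I`
into itself, `Q ↦ Q·s` and `Q ↦ Q·t` are mutually inverse inclusion-preserving bijections of
`{Q ∈ I : Q ⊊ P}`, so they permute its maximal elements, the tiles. The induced permutation
depends only on `s|_P`, which gives the surjection `G_P → H_P`.
-/

open Set

def CompClosed (S : Set (X → X)) : Prop :=
  ∀ s ∈ S, ∀ t ∈ S, (fun x => t (s x)) ∈ S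

theorem _root_.Set.Finite.bijOn_of_image_eq {α : Type*} {P : Set α} {s : α → α}
    (hP : P.Finite) (hsP : s '' P = P) : BijOn s P P :=
  (hP.surjOn_iff_bijOn_of_mapsTo (mapsTo_iff_image_subset.2 hsP.subset)).1 hsP.symm.subset

theorem _root_.Set.Finite.exists_pos_iterate_eqOn_id {α : Type*} {P : Set α} {s : α → α}
    (hP : P.Finite) (hsP : s '' P = P) : ∃ n, 0 < n ∧ EqOn s^[n] id P := by
  have hbij := hP.bijOn_of_image_eq hsP
  have := hP.to_subtype
  let g : Equiv.Perm P := hbij.equiv s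
  refine ⟨orderOf g, orderOf_pos g, fun p hp => ?_⟩
  have hg := congrArg (fun f : Equiv.Perm P => (f ⟨p, hp⟩ : α)) (pow_orderOf_eq_one g)
  have hg_restrict : ⇑g = hbij.mapsTo.restrict s P P := rfl
  simp only [Equiv.Perm.coe_pow, hg_restrict, hbij.mapsTo.iterate_restrict] at hg
  exact hg

theorem _root_.Set.InjOn.image_ssubset_of_image_eq {α : Type*} {P Q : Set α} {f : α → α}
    (hf : InjOn f P) (hfP : f '' P = P) (hQ : Q ⊂ P) : f '' Q ⊂ P :=
  hfP ▸ (hf.image_ssubset_image_iff hQ.subset subset_rfl).2 hQ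

theorem _root_.Set.LeftInvOn.image_eq_of_image_eq {α : Type*} {P : Set α} {s t : α → α}
    (h : LeftInvOn t s P) (hsP : s '' P = P) : t '' P = P :=
  (congrArg (t '' ·) hsP).symm.trans h.image_image

section Tiles

variable {S : Set (X → X)} {P : Set X} {s t : X → X}

theorem CompClosed.iterate_succ_mem (hS : CompClosed S) (hs : s ∈ S) :
    ∀ n, s^[n + 1] ∈ S
  | 0 => hs
  | n + 1 => by
    rw [Function.iterate_succ']
    exact hS _ (hS.iterate_succ_mem hs n) s hs

theorem CompClosed.exists_invOn [Finite X] (hS : CompClosed S) (hs : s ∈ S)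
    (hsP : s '' P = P) : ∃ t ∈ S, InvOn t s P P := by
  obtain ⟨n, hn, hid⟩ := P.toFinite.exists_pos_iterate_eqOn_id hsP
  obtain ⟨m, hm⟩ : ∃ m, 2 * n = m + 1 + 1 := ⟨2 * n - 2, by omega⟩
  have hid2 : EqOn s^[m + 1 + 1] id P := fun p hp => by
    rw [← hm, two_mul, Function.iterate_add_apply, hid hp]; exact hid hp
  refine ⟨s^[m + 1], hS.iterate_succ_mem hs m, fun p hp => ?_, fun p hp => ?_⟩
  · rw [← Function.iterate_succ_apply]; exact hid2 hp
  · rw [← Function.iterate_succ_apply' s]; exact hid2 hp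

theorem image_mem_extImgs (hS : CompClosed S) (hs : s ∈ S) {Q : Set X}
    (hQ : Q ∈ extImgs S) : s '' Q ∈ extImgs S := by
  rcases hQ with (⟨u, hu, rfl⟩ | rfl) | ⟨x, rfl⟩
  · exact Or.inl (Or.inl ⟨_, hS u hu s hs, image_image s u univ⟩)
  · exact Or.inl (Or.inl ⟨s, hs, rfl⟩)
  · exact Or.inr ⟨s x, image_singleton⟩

theorem image_mem_tiles (hS : CompClosed S) (hs : s ∈ S) (ht : t ∈ S) (hsP : s '' P = P)
    (hinv : InvOn t s P P) {T : Set X} (hT : T ∈ tiles S P) : s '' T ∈ tiles S P := by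
  obtain ⟨⟨hTI, hTP⟩, hTmax⟩ := hT
  refine ⟨⟨image_mem_extImgs hS hs hTI, hinv.1.injOn.image_ssubset_of_image_eq hsP hTP⟩,
    fun R hRI hRP hTR => ?_⟩
  have hT_sub : T ⊆ t '' R := hinv.1.image_image' hTP.subset ▸ image_mono hTR
  have hRt : t '' R ⊂ P :=
    hinv.2.injOn.image_ssubset_of_image_eq (hinv.1.image_eq_of_image_eq hsP) hRP
  rw [hTmax _ (image_mem_extImgs hS ht hRI) hRt hT_sub, hinv.2.image_image' hRP.subset]

theorem bijOn_image_tiles [Finite X] (hS : CompClosed S) (hs : s ∈ S) (hsP : s '' P = P) :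
    BijOn (fun T => s '' T) (tiles S P) (tiles S P) := by
  obtain ⟨t, ht, hinv⟩ := hS.exists_invOn hs hsP
  refine InvOn.bijOn (f' := fun T => t '' T)
    ⟨fun T hT => hinv.1.image_image' hT.1.2.subset,
      fun T hT => hinv.2.image_image' hT.1.2.subset⟩
    (fun T hT => image_mem_tiles hS hs ht hsP hinv hT)
    (fun T hT => image_mem_tiles hS ht hs (hinv.1.image_eq_of_image_eq hsP) hinv.symm hT)

end Tiles

section HolonomyGroup

variable [Finite X] {S : Set (X → X)} {P : Set X}

noncomputable def tilePerm (hS : CompClosed S) {s : X → X} (hs : s ∈ S) (hsP : s '' P = P) :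
    Equiv.Perm (tiles S P) :=
  (bijOn_image_tiles hS hs hsP).equiv _

theorem coe_tilePerm_apply (hS : CompClosed S) {s : X → X} (hs : s ∈ S) (hsP : s '' P = P)
    (T : tiles S P) : (tilePerm hS hs hsP T : Set X) = s '' T :=
  rfl

theorem one_mem_holonomyGroup (hS : CompClosed S) (hstab : ∃ s ∈ S, s '' P = P) :
    1 ∈ holonomyGroup S P := by
  obtain ⟨s, hs, hsP⟩ := hstab
  obtain ⟨t, ht, hinv⟩ := hS.exists_invOn hs hsP
  refine ⟨fun x => t (s x), hS s hs t ht, ?_, fun T => ?_⟩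
  · rw [← image_image, hinv.1.image_image]
  · rw [← image_image, hinv.1.image_image' T.2.1.2.subset]
    rfl

omit [Finite X] in
theorem mul_mem_holonomyGroup (hS : CompClosed S) {σ τ : Equiv.Perm (tiles S P)}
    (hσ : σ ∈ holonomyGroup S P) (hτ : τ ∈ holonomyGroup S P) :
    σ * τ ∈ holonomyGroup S P := by
  obtain ⟨s, hs, hsP, hσs⟩ := hσ
  obtain ⟨t, ht, htP, hτt⟩ := hτ
  refine ⟨fun x => s (t x), hS t ht s hs, by rw [← image_image, htP, hsP], fun T => ?_⟩
  rw [Equiv.Perm.mul_apply, hσs, hτt, image_image]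

theorem inv_mem_holonomyGroup (hS : CompClosed S) {σ : Equiv.Perm (tiles S P)}
    (hσ : σ ∈ holonomyGroup S P) : σ⁻¹ ∈ holonomyGroup S P := by
  obtain ⟨s, hs, hsP, hσs⟩ := hσ
  obtain ⟨t, ht, hinv⟩ := hS.exists_invOn hs hsP
  refine ⟨t, ht, hinv.1.image_eq_of_image_eq hsP, fun T => ?_⟩
  have hT := hσs (σ⁻¹ T)
  rw [← Equiv.Perm.mul_apply, mul_inv_cancel, Equiv.Perm.one_apply] at hT
  rw [hT, hinv.1.image_image' (σ⁻¹ T).2.1.2.subset]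

open Classical in
/-- `s|_P ↦ (T ↦ T·s)` on `G_P`, and `1` outside `G_P`. -/
noncomputable def permutatorToHolonomy (hS : CompClosed S) (σ : Equiv.Perm P) :
    Equiv.Perm (tiles S P) :=
  if h : σ ∈ permutator S P then tilePerm hS h.choose_spec.1 h.choose_spec.2.1 else 1

theorem permutatorToHolonomy_apply (hS : CompClosed S) {σ : Equiv.Perm P} {s : X → X}
    (hs : s ∈ S) (hsP : s '' P = P) (hσs : ∀ p : P, (σ p : X) = s p) (T : tiles S P) :
    (permutatorToHolonomy hS σ T : Set X) = s '' T := by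
  have hσ : σ ∈ permutator S P := ⟨s, hs, hsP, hσs⟩
  rw [permutatorToHolonomy, dif_pos hσ, coe_tilePerm_apply]
  refine EqOn.image_eq fun p hp => ?_
  have hpP : p ∈ P := T.2.1.2.subset hp
  exact (hσ.choose_spec.2.2 ⟨p, hpP⟩).symm.trans (hσs ⟨p, hpP⟩)

theorem permutatorToHolonomy_mem (hS : CompClosed S) {σ : Equiv.Perm P}
    (hσ : σ ∈ permutator S P) : permutatorToHolonomy hS σ ∈ holonomyGroup S P := by
  obtain ⟨s, hs, hsP, hσs⟩ := hσ
  exact ⟨s, hs, hsP, permutatorToHolonomy_apply hS hs hsP hσs⟩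

theorem permutatorToHolonomy_mul (hS : CompClosed S) {σ τ : Equiv.Perm P}
    (hσ : σ ∈ permutator S P) (hτ : τ ∈ permutator S P) :
    permutatorToHolonomy hS (σ * τ) =
      permutatorToHolonomy hS σ * permutatorToHolonomy hS τ := by
  obtain ⟨s, hs, hsP, hσs⟩ := hσ
  obtain ⟨t, ht, htP, hτt⟩ := hτ
  have hstP : (fun x => s (t x)) '' P = P := by rw [← image_image, htP, hsP]
  ext T : 2
  rw [Equiv.Perm.mul_apply, permutatorToHolonomy_apply hS (hS t ht s hs) hstP
      (fun p => by rw [Equiv.Perm.mul_apply, hσs, hτt]),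
    permutatorToHolonomy_apply hS hs hsP hσs, permutatorToHolonomy_apply hS ht htP hτt,
    image_image]

theorem exists_permutatorToHolonomy_eq (hS : CompClosed S) {h : Equiv.Perm (tiles S P)}
    (hh : h ∈ holonomyGroup S P) : ∃ σ ∈ permutator S P, permutatorToHolonomy hS σ = h := by
  obtain ⟨s, hs, hsP, hhs⟩ := hh
  let σ : Equiv.Perm P := (P.toFinite.bijOn_of_image_eq hsP).equiv s
  have hσs : ∀ p : P, (σ p : X) = s p := fun _ => rfl
  refine ⟨σ, ⟨s, hs, hsP, hσs⟩, ?_⟩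
  ext T : 2
  rw [permutatorToHolonomy_apply hS hs hsP hσs, hhs]

end HolonomyGroup

theorem holonomy_group_and_surjection_general {X : Type*} [Fintype X]
    (S : Set (X → X)) (hS : ∀ s ∈ S, ∀ t ∈ S, (fun x => t (s x)) ∈ S)
    (P : Set X)
    (hstab : ∃ s ∈ S, s '' P = P) :
    (∀ s ∈ S, s '' P = P → ∀ T ∈ tiles S P, s '' T ∈ tiles S P) ∧
    (∀ s ∈ S, s '' P = P → Set.BijOn (fun T => s '' T) (tiles S P) (tiles S P)) ∧
    (1 : Equiv.Perm ↥(tiles S P)) ∈ holonomyGroup S P ∧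
    (∀ σ ∈ holonomyGroup S P, ∀ τ ∈ holonomyGroup S P, σ * τ ∈ holonomyGroup S P) ∧
    (∀ σ ∈ holonomyGroup S P, σ⁻¹ ∈ holonomyGroup S P) ∧
    ∃ ψ : Equiv.Perm ↥P → Equiv.Perm ↥(tiles S P),
      (∀ σ ∈ permutator S P, ψ σ ∈ holonomyGroup S P) ∧
      (∀ σ ∈ permutator S P, ∀ τ ∈ permutator S P, ψ (σ * τ) = ψ σ * ψ τ) ∧
      (∀ h ∈ holonomyGroup S P, ∃ σ ∈ permutator S P, ψ σ = h) ∧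
      (∀ s ∈ S, s '' P = P → ∀ σ ∈ permutator S P, (∀ p : ↥P, (σ p : X) = s p) →
        ∀ T : ↥(tiles S P), ((ψ σ T : Set X) : Set X) = s '' (T : Set X)) :=
  ⟨fun _ hs hsP _ hT => (bijOn_image_tiles hS hs hsP).mapsTo hT,
    fun _ hs hsP => bijOn_image_tiles hS hs hsP,
    one_mem_holonomyGroup hS hstab,
    fun _ hσ _ hτ => mul_mem_holonomyGroup hS hσ hτ,
    fun _ hσ => inv_mem_holonomyGroup hS hσ,
    permutatorToHolonomy hS,
    fun _ hσ => permutatorToHolonomy_mem hS hσ,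
    fun _ hσ _ hτ => permutatorToHolonomy_mul hS hσ hτ,
    fun _ hh => exists_permutatorToHolonomy_eq hS hh,
    fun _ hs hsP _ _ hσs => permutatorToHolonomy_apply hS hs hsP hσs⟩

/-- the stabilizer acts on tiles by permutations, the holonomy
group `H_P` is a subgroup of `Sym(tiles P)`, and `s|_P ↦ (T ↦ T·s)` is a
well-defined surjective group homomorphism `G_P ↠ H_P`. -/
theorem holonomy_group_and_surjection {X : Type*} [Fintype X] [Nonempty X]
    (S : Set (X → X)) (hS : ∀ s ∈ S, ∀ t ∈ S, (fun x => t (s x)) ∈ S)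
    (P : Set X) (hP : P ∈ extImgs S) (hns : nonSingleton P)
    (hstab : ∃ s ∈ S, s '' P = P) :
    (∀ s ∈ S, s '' P = P → ∀ T ∈ tiles S P, s '' T ∈ tiles S P) ∧
    (∀ s ∈ S, s '' P = P → Set.BijOn (fun T => s '' T) (tiles S P) (tiles S P)) ∧
    (1 : Equiv.Perm ↥(tiles S P)) ∈ holonomyGroup S P ∧
    (∀ σ ∈ holonomyGroup S P, ∀ τ ∈ holonomyGroup S P, σ * τ ∈ holonomyGroup S P) ∧
    (∀ σ ∈ holonomyGroup S P, σ⁻¹ ∈ holonomyGroup S P) ∧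
    ∃ ψ : Equiv.Perm ↥P → Equiv.Perm ↥(tiles S P),
      (∀ σ ∈ permutator S P, ψ σ ∈ holonomyGroup S P) ∧
      (∀ σ ∈ permutator S P, ∀ τ ∈ permutator S P, ψ (σ * τ) = ψ σ * ψ τ) ∧
      (∀ h ∈ holonomyGroup S P, ∃ σ ∈ permutator S P, ψ σ = h) ∧
      (∀ s ∈ S, s '' P = P → ∀ σ ∈ permutator S P, (∀ p : ↥P, (σ p : X) = s p) →
        ∀ T : ↥(tiles S P), ((ψ σ T : Set X) : Set X) = s '' (T : Set X)) :=
  holonomy_group_and_surjection_general S hS P hstab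

end Holonomy
end

section
/- If P, Q are non-singleton members of the extended image set I with P ≡_S Q, then there exist a bijection φ : tiles(P) → tiles(Q) and a group isomorphism ψ : H_P → H_Q such that φ(T·g) = φ(T)·ψ(g) for all T ∈ tiles(P) and g ∈ H_P; in particular |tiles(P)| = |tiles(Q)| and the holonomy groups H_P and H_Q are isomorphic as permutation groups. -/
namespace Holonomy

variable {X : Type*}

section Helpers

variable {X : Type*}

lemma image_mem_extImgs_s11 {S : Set (X → X)} (hS : ∀ s ∈ S, ∀ t ∈ S, (fun x => t (s x)) ∈ S)
    {a : X → X} (ha : a ∈ S) {T : Set X} (hT : T ∈ extImgs S) : a '' T ∈ extImgs S := by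
  rcases hT with (hT | hT) | hT
  · obtain ⟨e, he, rfl⟩ := hT
    exact Or.inl (Or.inl ⟨fun x => a (e x), hS e he a ha, Set.image_image a e _⟩)
  · rcases hT
    exact Or.inl (Or.inl ⟨a, ha, rfl⟩)
  · obtain ⟨x, rfl⟩ := hT
    exact Or.inr ⟨a x, Set.image_singleton⟩

lemma image_of_forall_eq {f : X → X} {P T : Set X} (h : ∀ x ∈ P, f x = x) (hT : T ⊆ P) :
    f '' T = T := by
  rw [Set.image_congr fun x hx => h x (hT hx), Set.image_id']

lemma iterate_image {u : X → X} {P : Set X} (hu : u '' P = P) : ∀ k, u^[k] '' P = P := by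
  intro k
  induction k with
  | zero => simp
  | succ k ih => rw [Function.iterate_succ, Set.image_comp, hu, ih]

lemma iterate_injOn {u : X → X} {P : Set X} (hu : u '' P = P) (hinj : Set.InjOn u P) :
    ∀ k, Set.InjOn u^[k] P := by
  intro k
  induction k with
  | zero => simpa using Set.injOn_id P
  | succ k ih =>
    rw [Function.iterate_succ]
    exact ih.comp hinj (Set.mapsTo_iff_image_subset.mpr hu.le)

lemma iterate_mem {S : Set (X → X)} (hS : ∀ s ∈ S, ∀ t ∈ S, (fun x => t (s x)) ∈ S)
    {u : X → X} (hu : u ∈ S) : ∀ k, u^[k + 1] ∈ S := by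
  intro k
  induction k with
  | zero => simpa using hu
  | succ k ih =>
    have h2 := hS (u^[k + 1]) ih u hu
    have : u^[k + 1 + 1] = fun x => u (u^[k + 1] x) := by
      funext x; exact Function.iterate_succ_apply' u (k + 1) x
    rw [this]; exact h2

lemma exists_iterate_id [Finite X] {u : X → X} {P : Set X} (hu : u '' P = P)
    (hinj : Set.InjOn u P) : ∃ m, 2 ≤ m ∧ ∀ x ∈ P, u^[m] x = x := by
  have hf : ∀ x : ↥P, u x.1 ∈ P := by
    intro x; exact hu.le (Set.mem_image_of_mem u x.2)
  let f : ↥P → ↥P := fun x => ⟨u x.1, hf x⟩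
  have hinjf : Function.Injective f := by
    intro a b hab
    exact Subtype.ext (hinj a.2 b.2 (congrArg Subtype.val hab))
  let e : Equiv.Perm ↥P := Equiv.ofBijective f ((Finite.injective_iff_bijective).mp hinjf)
  have key : ∀ (k : ℕ) (x : ↥P), ((e ^ k) x : X) = u^[k] x.1 := by
    intro k
    induction k with
    | zero => intro x; simp
    | succ k ih =>
      intro x
      have h1 : (e ^ (k + 1)) x = (e ^ k) (e x) := by
        rw [pow_succ]; rfl
      rw [h1, ih (e x)]
      have h2 : (e x : X) = u x.1 := rfl
      rw [h2, ← Function.iterate_succ_apply]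
  refine ⟨2 * orderOf e, by have := orderOf_pos e; omega, ?_⟩
  intro x hx
  have h1 : e ^ (2 * orderOf e) = 1 := by
    rw [mul_comm, pow_mul, pow_orderOf_eq_one, one_pow]
  have h2 := key (2 * orderOf e) ⟨x, hx⟩
  rw [h1] at h2
  exact h2.symm

lemma tile_map [Finite X] {S : Set (X → X)} (hS : ∀ s ∈ S, ∀ t ∈ S, (fun x => t (s x)) ∈ S)
    {s t : X → X} {P Q : Set X} (hs : s ∈ S) (ht : t ∈ S)
    (htP : t '' P = Q) (hsQ : s '' Q = P)
    (hinjt : Set.InjOn t P) (hinjs : Set.InjOn s Q)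
    {T : Set X} (hT : T ∈ tiles S P) : t '' T ∈ tiles S Q := by
  have hTP : T ⊆ P := hT.1.2.le
  -- the permutation u of P
  set u : X → X := fun x => s (t x) with hu_def
  have hu : u ∈ S := hS t ht s hs
  have huP : u '' P = P := by
    rw [hu_def, ← Set.image_image, htP, hsQ]
  have hinju : Set.InjOn u P := by
    intro a ha b hb hab
    have h1 : t a ∈ Q := by rw [← htP]; exact Set.mem_image_of_mem t ha
    have h2 : t b ∈ Q := by rw [← htP]; exact Set.mem_image_of_mem t hb
    exact hinjt ha hb (hinjs h1 h2 hab)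
  obtain ⟨m, hm2, hmid⟩ := exists_iterate_id huP hinju
  have hiterS : u^[m - 1] ∈ S := by
    have := iterate_mem hS hu (m - 2)
    have hm : m - 2 + 1 = m - 1 := by omega
    rwa [hm] at this
  have hiterP : u^[m - 1] '' P = P := iterate_image huP (m - 1)
  have hiterInj : Set.InjOn u^[m - 1] P := iterate_injOn huP hinju (m - 1)
  refine ⟨⟨image_mem_extImgs_s11 hS ht hT.1.1, ?_⟩, ?_⟩
  · -- t '' T ⊂ Q
    rw [← htP]
    refine ⟨Set.image_mono hTP, fun hcon => hT.1.2.ne ?_⟩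
    have := Set.InjOn.image_eq_image_iff hinjt hTP subset_rfl
    exact this.mp (le_antisymm (Set.image_mono hTP) hcon)
  · intro R hR hRQ htTR
    have hRsub : R ⊆ Q := hRQ.le
    -- pull back R
    set R' : Set X := u^[m - 1] '' (s '' R) with hR'_def
    have hR'ext : R' ∈ extImgs S := image_mem_extImgs_s11 hS hiterS (image_mem_extImgs_s11 hS hs hR)
    have hsR_sub : s '' R ⊆ P := hsQ ▸ Set.image_mono hRsub
    have hsR_ssub : s '' R ⊂ P := by
      rw [← hsQ]
      refine ⟨Set.image_mono hRsub, fun hcon => hRQ.ne ?_⟩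
      exact (Set.InjOn.image_eq_image_iff hinjs hRsub subset_rfl).mp
        (le_antisymm (Set.image_mono hRsub) hcon)
    have hR'P : R' ⊂ P := by
      rw [← hiterP]
      refine ⟨Set.image_mono hsR_sub, fun hcon => hsR_ssub.ne ?_⟩
      exact (Set.InjOn.image_eq_image_iff hiterInj hsR_sub subset_rfl).mp
        (le_antisymm (Set.image_mono hsR_sub) hcon)
    have hTR' : T ⊆ R' := by
      have h1 : T = u^[m] '' T := (image_of_forall_eq hmid hTP).symm
      have h2 : u^[m] '' T = u^[m - 1] '' (u '' T) := by
        have h : u^[m] = u^[m - 1] ∘ u := by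
          conv_lhs => rw [← Nat.succ_pred_eq_of_pos (show 0 < m by omega)]
          exact Function.iterate_succ u (m - 1)
        rw [h, Set.image_comp]
      have h3 : u '' T = s '' (t '' T) := by rw [Set.image_image]
      have h4 : s '' (t '' T) ⊆ s '' R := Set.image_mono htTR
      rw [h1, h2, h3]
      exact Set.image_mono h4
    have hTeq : T = R' := hT.2 R' hR'ext hR'P hTR'
    -- cardinalities
    have hc1 : R'.ncard = (s '' R).ncard :=
      Set.ncard_image_of_injOn (hiterInj.mono hsR_sub)
    have hc2 : (s '' R).ncard = R.ncard := Set.ncard_image_of_injOn (hinjs.mono hRsub)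
    have hc3 : (t '' T).ncard = T.ncard := Set.ncard_image_of_injOn (hinjt.mono hTP)
    have hcard : R.ncard ≤ (t '' T).ncard := by
      rw [hc3, hTeq, hc1, hc2]
    exact Set.eq_of_subset_of_ncard_le htTR hcard

end Helpers


/-- for subduction-equivalent non-singleton members of the
extended image set there are a bijection of tiles and a group isomorphism of
holonomy groups compatible with the actions; in particular the tile sets are
equinumerous. -/
theorem holonomy_iso_of_subEquiv {X : Type*} [Fintype X] [Nonempty X]
    (S : Set (X → X)) (hS : ∀ s ∈ S, ∀ t ∈ S, (fun x => t (s x)) ∈ S)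
    (P Q : Set X) (hP : P ∈ extImgs S) (hQ : Q ∈ extImgs S)
    (hnsP : nonSingleton P) (hnsQ : nonSingleton Q)
    (h : SubEquiv S P Q) :
    ∃ φ : ↥(tiles S P) → ↥(tiles S Q), Function.Bijective φ ∧
      (tiles S P).ncard = (tiles S Q).ncard ∧
      ∃ ψ : Equiv.Perm ↥(tiles S P) → Equiv.Perm ↥(tiles S Q),
        Set.BijOn ψ (holonomyGroup S P) (holonomyGroup S Q) ∧
        (∀ g ∈ holonomyGroup S P, ∀ k ∈ holonomyGroup S P,
          ψ (g * k) = ψ g * ψ k) ∧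
        (∀ g ∈ holonomyGroup S P, ∀ T : ↥(tiles S P), φ (g T) = ψ g (φ T)) := by
  obtain ⟨⟨s, hs, hPsQ⟩, ⟨t, ht, hQtP⟩⟩ := h
  by_cases hPQ : P = Q
  · subst hPQ
    exact ⟨id, Function.bijective_id, rfl, id, Set.bijOn_id _, fun g _ k _ => rfl,
      fun g _ T => rfl⟩
  have hst : s ∈ S ∧ t ∈ S := by
    rcases Set.mem_insert_iff.mp hs with rfl | hsS
    · rw [Set.image_id] at hPsQ
      rcases Set.mem_insert_iff.mp ht with rfl | htS
      · rw [Set.image_id] at hQtP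
        exact absurd (le_antisymm hPsQ hQtP) hPQ
      · exfalso
        apply hPQ
        have c1 : Q.ncard ≤ (t '' P).ncard := Set.ncard_le_ncard hQtP (Set.toFinite _)
        have c2 : (t '' P).ncard ≤ P.ncard := Set.ncard_image_le (Set.toFinite _)
        exact Set.eq_of_subset_of_ncard_le hPsQ (by omega)
    · rcases Set.mem_insert_iff.mp ht with rfl | htS
      · exfalso
        apply hPQ
        rw [Set.image_id] at hQtP
        have c1 : P.ncard ≤ (s '' Q).ncard := Set.ncard_le_ncard hPsQ (Set.toFinite _)
        have c2 : (s '' Q).ncard ≤ Q.ncard := Set.ncard_image_le (Set.toFinite _)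
        exact (Set.eq_of_subset_of_ncard_le hQtP (by omega)).symm
      · exact ⟨hsS, htS⟩
  obtain ⟨hsS, htS⟩ := hst
  clear hs ht
  -- basic equalities
  have c1 : Q.ncard ≤ (t '' P).ncard := Set.ncard_le_ncard hQtP (Set.toFinite _)
  have c2 : (t '' P).ncard ≤ P.ncard := Set.ncard_image_le (Set.toFinite _)
  have c3 : P.ncard ≤ (s '' Q).ncard := Set.ncard_le_ncard hPsQ (Set.toFinite _)
  have c4 : (s '' Q).ncard ≤ Q.ncard := Set.ncard_image_le (Set.toFinite _)
  have htP : t '' P = Q := (Set.eq_of_subset_of_ncard_le hQtP (by omega)).symm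
  have hsQ : s '' Q = P := (Set.eq_of_subset_of_ncard_le hPsQ (by omega)).symm
  have hinjt : Set.InjOn t P := Set.injOn_of_ncard_image_eq (by rw [htP]; omega)
  have hinjs : Set.InjOn s Q := Set.injOn_of_ncard_image_eq (by rw [hsQ]; omega)
  -- tile maps
  have φmem : ∀ T ∈ tiles S P, t '' T ∈ tiles S Q :=
    fun T hT => tile_map hS hsS htS htP hsQ hinjt hinjs hT
  have βmem : ∀ T ∈ tiles S Q, s '' T ∈ tiles S P :=
    fun T hT => tile_map hS htS hsS hsQ htP hinjs hinjt hT
  let φ : ↥(tiles S P) → ↥(tiles S Q) := fun T => ⟨t '' T.1, φmem T.1 T.2⟩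
  let β : ↥(tiles S Q) → ↥(tiles S P) := fun T => ⟨s '' T.1, βmem T.1 T.2⟩
  have hφinj : Function.Injective φ := by
    intro a b hab
    apply Subtype.ext
    exact (Set.InjOn.image_eq_image_iff hinjt a.2.1.2.le b.2.1.2.le).mp
      (congrArg Subtype.val hab)
  have hβinj : Function.Injective β := by
    intro a b hab
    apply Subtype.ext
    exact (Set.InjOn.image_eq_image_iff hinjs a.2.1.2.le b.2.1.2.le).mp
      (congrArg Subtype.val hab)
  have hcard : Nat.card ↥(tiles S P) = Nat.card ↥(tiles S Q) :=
    le_antisymm (Nat.card_le_card_of_injective φ hφinj)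
      (Nat.card_le_card_of_injective β hβinj)
  have hφbij : Function.Bijective φ := (Nat.bijective_iff_injective_and_card φ).mpr
    ⟨hφinj, hcard⟩
  have hncard : (tiles S P).ncard = (tiles S Q).ncard := by
    rw [← Nat.card_coe_set_eq, ← Nat.card_coe_set_eq]; exact hcard
  set Φ : ↥(tiles S P) ≃ ↥(tiles S Q) := Equiv.ofBijective φ hφbij with hΦ_def
  -- the permutation u of P and its iterates
  set u : X → X := fun x => s (t x) with hu_def
  have hu : u ∈ S := hS t htS s hsS
  have him : ∀ A : Set X, s '' (t '' A) = u '' A := by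
    intro A; rw [hu_def]; exact Set.image_image s t A
  have huP : u '' P = P := by rw [← him, htP, hsQ]
  have hinju : Set.InjOn u P := by
    intro a ha b hb hab
    have h1 : t a ∈ Q := by rw [← htP]; exact Set.mem_image_of_mem t ha
    have h2 : t b ∈ Q := by rw [← htP]; exact Set.mem_image_of_mem t hb
    exact hinjt ha hb (hinjs h1 h2 hab)
  obtain ⟨m, hm2, hmid⟩ := exists_iterate_id huP hinju
  have hiterS : u^[m - 1] ∈ S := by
    have h := iterate_mem hS hu (m - 2)
    have hm : m - 2 + 1 = m - 1 := by omega
    rwa [hm] at h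
  have hiterP : u^[m - 1] '' P = P := iterate_image huP (m - 1)
  have hcollapse : ∀ A : Set X, A ⊆ P → u^[m - 1] '' (s '' (t '' A)) = A := by
    intro A hA
    rw [him, ← Set.image_comp]
    have h : u^[m - 1] ∘ u = u^[m] := by
      conv_rhs => rw [← Nat.succ_pred_eq_of_pos (show 0 < m by omega)]
      exact (Function.iterate_succ u (m - 1)).symm
    rw [h]
    exact image_of_forall_eq hmid hA
  have hΦval : ∀ T : ↥(tiles S P), ((Φ T : Set X)) = t '' (T : Set X) := fun T => rfl
  have hsymmval : ∀ T' : ↥(tiles S Q),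
      t '' ((Φ.symm T' : Set X)) = (T' : Set X) := by
    intro T'
    have h := Φ.apply_symm_apply T'
    have h2 := congrArg Subtype.val h
    rw [← h2]; rfl
  have hcoll2 : ∀ T' : ↥(tiles S Q),
      u^[m - 1] '' (s '' (T' : Set X)) = (Φ.symm T' : Set X) := by
    intro T'
    conv_lhs => rw [← hsymmval T']
    exact hcollapse _ (Φ.symm T').2.1.2.le
  refine ⟨φ, hφbij, hncard, fun g => Φ.permCongr g, ⟨?_, ?_, ?_⟩, ?_, ?_⟩
  · -- MapsTo
    intro g hg
    obtain ⟨w, hwS, hwP, hwT⟩ := hg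
    refine ⟨fun x => t (w (u^[m - 1] (s x))),
      hS _ (hS _ (hS s hsS _ hiterS) w hwS) t htS, ?_, ?_⟩
    · have h : (fun x => t (w (u^[m - 1] (s x)))) '' Q
          = t '' (w '' (u^[m - 1] '' (s '' Q))) := by
        simp [Set.image_image]
      rw [h, hsQ, hiterP, hwP, htP]
    · intro T'
      have hRHS : (fun x => t (w (u^[m - 1] (s x)))) '' (T' : Set X)
          = t '' (w '' (u^[m - 1] '' (s '' (T' : Set X)))) := by
        simp [Set.image_image]
      rw [hRHS, hcoll2 T', ← hwT (Φ.symm T')]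
      rfl
  · -- InjOn
    exact (Equiv.injective Φ.permCongr).injOn
  · -- SurjOn
    intro g' hg'
    obtain ⟨r, hrS, hrQ, hrT⟩ := hg'
    refine ⟨Φ.permCongr.symm g', ?_, Φ.permCongr.apply_symm_apply g'⟩
    refine ⟨fun x => u^[m - 1] (s (r (t x))),
      hS _ (hS _ (hS t htS r hrS) s hsS) _ hiterS, ?_, ?_⟩
    · have h : (fun x => u^[m - 1] (s (r (t x)))) '' P
          = u^[m - 1] '' (s '' (r '' (t '' P))) := by
        simp [Set.image_image]
      rw [h, htP, hrQ, hsQ, hiterP]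
    · intro T
      have hRHS : (fun x => u^[m - 1] (s (r (t x)))) '' (T : Set X)
          = u^[m - 1] '' (s '' (r '' (t '' (T : Set X)))) := by
        simp [Set.image_image]
      have e2 : t '' (T : Set X) = (Φ T : Set X) := rfl
      have e3 : r '' ((Φ T : Set X)) = ((g' (Φ T)) : Set X) := (hrT (Φ T)).symm
      rw [hRHS, e2, e3, hcoll2 (g' (Φ T))]
      rfl
  · -- multiplicative
    intro g _ k _
    ext x
    simp [Equiv.Perm.mul_apply]
  · -- compatibility
    intro g hg T
    simp only [Equiv.permCongr_apply]
    rw [show φ T = Φ T from rfl, Equiv.symm_apply_apply]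
    rfl


end Holonomy
end

section
/- For every P ∈ I and s ∈ S, the set P·s belongs to I and h(P·s) ≤ h(P) (equivalently, depth never decreases: d(P·s) ≥ d(P)). Moreover, if P is non-singleton and h(P·s) = h(P), then P ≡_S P·s. -/
namespace Holonomy

variable {X : Type*}

section Aux

variable {X : Type*}

lemma sub_refl (S : Set (X → X)) (P : Set X) : Subduction S P P :=
  ⟨id, Set.mem_insert _ _, by simp⟩

lemma sub_trans {S : Set (X → X)} (hS : ∀ s ∈ S, ∀ t ∈ S, (fun x => t (s x)) ∈ S)
    {P Q R : Set X} (h1 : Subduction S P Q) (h2 : Subduction S Q R) : Subduction S P R := by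
  obtain ⟨s, hs, hPQ⟩ := h1
  obtain ⟨t, ht, hQR⟩ := h2
  refine ⟨fun x => s (t x), ?_, ?_⟩
  · rcases hs with rfl | hs
    · simpa using ht
    · rcases ht with rfl | ht
      · simpa using Set.mem_insert_of_mem _ hs
      · exact Set.mem_insert_of_mem _ (hS t ht s hs)
  · intro x hx
    have := hPQ hx
    obtain ⟨y, hy, rfl⟩ := this
    obtain ⟨z, hz, rfl⟩ := hQR hy
    exact ⟨z, hz, rfl⟩

lemma ssub_trans {S : Set (X → X)} (hS : ∀ s ∈ S, ∀ t ∈ S, (fun x => t (s x)) ∈ S)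
    {P Q R : Set X} (h1 : SSubduction S P Q) (h2 : SSubduction S Q R) : SSubduction S P R :=
  ⟨sub_trans hS h1.1 h2.1, fun h => h2.2 (sub_trans hS h h1.1)⟩

/-- The set of chain lengths defining `height`. -/
def HSet (S : Set (X → X)) (Q : Set X) : Set ℕ :=
  {n : ℕ | ∃ l : List (Set X), l.length = n ∧
    (∀ R ∈ l, R ∈ extImgs S ∧ nonSingleton R) ∧
    l.Chain' (SSubduction S) ∧ l.getLast? = some Q}

lemma height_eq (S : Set (X → X)) (Q : Set X) : height S Q = sSup (HSet S Q) := rfl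

lemma hset_bdd [Fintype X] {S : Set (X → X)}
    (hS : ∀ s ∈ S, ∀ t ∈ S, (fun x => t (s x)) ∈ S) (Q : Set X) :
    BddAbove (HSet S Q) := by
  refine ⟨Fintype.card (Set X), fun n hn => ?_⟩
  obtain ⟨l, hlen, _, hchain, _⟩ := hn
  haveI : IsTrans (Set X) (SSubduction S) := ⟨fun _ _ _ => ssub_trans hS⟩
  have hpw : l.Pairwise (SSubduction S) := List.isChain_iff_pairwise.mp hchain
  have hnd : l.Nodup := hpw.imp (fun {a b} h => by
    rintro rfl
    exact h.2 h.1)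
  rw [← hlen]
  exact hnd.length_le_card

lemma one_mem_hset {S : Set (X → X)} {P : Set X} (hP : P ∈ extImgs S)
    (hns : nonSingleton P) : 1 ∈ HSet S P :=
  ⟨[P], rfl, by simpa using ⟨hP, hns⟩, List.isChain_singleton P, rfl⟩

lemma height_singleton {S : Set (X → X)} {Q : Set X} (hQ : ∃ x : X, Q = {x}) :
    height S Q = 0 := by
  have : HSet S Q = ∅ := by
    ext n
    simp only [Set.mem_empty_iff_false, iff_false]
    rintro ⟨l, _, hmem, _, hlast⟩
    obtain ⟨l', rfl⟩ := List.getLast?_eq_some_iff.mp hlast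
    exact (hmem Q (by simp)).2 hQ
  rw [height_eq, this, csSup_empty]
  rfl

/-- If `Q ⊆_S P` but `¬ P ⊆_S Q`, then every chain ending at `Q` extends to `P`. -/
lemma succ_mem_hset {S : Set (X → X)} {P Q : Set X}
    (hP : P ∈ extImgs S) (hPns : nonSingleton P)
    (hQP : Subduction S Q P) (hPQ : ¬ Subduction S P Q)
    {n : ℕ} (hn : n ∈ HSet S Q) : n + 1 ∈ HSet S P := by
  obtain ⟨l, hlen, hmem, hchain, hlast⟩ := hn
  refine ⟨l ++ [P], by simp [hlen], ?_, ?_, List.getLast?_concat (l := l)⟩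
  · intro R hR
    rcases List.mem_append.mp hR with h | h
    · exact hmem R h
    · simp at h; subst h; exact ⟨hP, hPns⟩
  · unfold List.Chain'
    rw [List.isChain_append]
    refine ⟨hchain, List.isChain_singleton P, ?_⟩
    intro x hx y hy
    simp only [List.head?_cons, Option.mem_some_iff] at hy
    subst hy
    rw [hlast, Option.mem_some_iff] at hx
    subst hx
    exact ⟨hQP, hPQ⟩

lemma height_le_of_subduction [Fintype X] {S : Set (X → X)}
    (hS : ∀ s ∈ S, ∀ t ∈ S, (fun x => t (s x)) ∈ S)
    {P Q : Set X} (hP : P ∈ extImgs S) (hPns : nonSingleton P)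
    (hQP : Subduction S Q P) : height S Q ≤ height S P := by
  rw [height_eq, height_eq]
  apply csSup_le'
  intro n hn
  by_cases hPQ : Subduction S P Q
  · -- replace the last element of the chain by P
    obtain ⟨l, hlen, hmem, hchain, hlast⟩ := hn
    obtain ⟨l', rfl⟩ := List.getLast?_eq_some_iff.mp hlast
    apply le_csSup (hset_bdd hS P)
    refine ⟨l' ++ [P], by simpa using hlen, ?_, ?_, List.getLast?_concat (l := l')⟩
    · intro R hR
      rcases List.mem_append.mp hR with h | h
      · exact hmem R (List.mem_append.mpr (Or.inl h))
      · simp at h; subst h; exact ⟨hP, hPns⟩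
    · unfold List.Chain' at hchain ⊢
      rw [List.isChain_append] at hchain ⊢
      refine ⟨hchain.1, List.isChain_singleton P, ?_⟩
      intro x hx y hy
      simp only [List.head?_cons, Option.mem_some_iff] at hy
      subst hy
      have hxQ : SSubduction S x Q := hchain.2.2 x hx Q (by simp)
      exact ⟨sub_trans hS hxQ.1 hQP, fun h => hxQ.2 (sub_trans hS hQP h)⟩
  · have : n + 1 ∈ HSet S P := succ_mem_hset hP hPns hQP hPQ hn
    exact le_trans (Nat.le_succ n) (le_csSup (hset_bdd hS P) this)

end Aux

/-- the extended image set is closed under the action, depth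
never decreases (equivalently height never increases), and if `P` is
non-singleton and the height is preserved then `P ≡_S P·s`. -/
theorem depth_never_decreases {X : Type*} [Fintype X] [Nonempty X]
    (S : Set (X → X)) (hS : ∀ s ∈ S, ∀ t ∈ S, (fun x => t (s x)) ∈ S)
    (P : Set X) (hP : P ∈ extImgs S) (s : X → X) (hs : s ∈ S) :
    s '' P ∈ extImgs S ∧
    height S (s '' P) ≤ height S P ∧
    depth S P ≤ depth S (s '' P) ∧
    (nonSingleton P → height S (s '' P) = height S P → SubEquiv S P (s '' P)) := by
  -- (1) closure of extImgs under the action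
  have h1 : s '' P ∈ extImgs S := by
    rcases hP with (⟨t, ht, rfl⟩ | hu) | ⟨x, rfl⟩
    · exact Or.inl (Or.inl ⟨fun x => s (t x), hS t ht s hs, by rw [Set.image_image]⟩)
    · simp only [Set.mem_singleton_iff] at hu
      subst hu
      exact Or.inl (Or.inl ⟨s, hs, rfl⟩)
    · exact Or.inr ⟨s x, by rw [Set.image_singleton]⟩
  -- s '' P ⊆_S P always
  have hsub : Subduction S (s '' P) P :=
    ⟨s, Set.mem_insert_of_mem _ hs, subset_refl _⟩
  -- (2) height does not increase
  have h2 : height S (s '' P) ≤ height S P := by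
    by_cases hPns : nonSingleton P
    · exact height_le_of_subduction hS hP hPns hsub
    · -- P is a singleton, hence so is s '' P
      rw [nonSingleton, not_not] at hPns
      obtain ⟨x, rfl⟩ := hPns
      rw [height_singleton ⟨s x, by rw [Set.image_singleton]⟩]
      exact Nat.zero_le _
  refine ⟨h1, h2, ?_, ?_⟩
  · -- (3) depth does not decrease
    unfold depth
    exact Nat.add_le_add_right (Nat.sub_le_sub_left h2 _) 1
  · -- (4) heights equal forces subduction-equivalence
    intro hPns hheq
    have hPone : 1 ≤ height S P :=
      le_csSup (hset_bdd hS P) (one_mem_hset hP hPns)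
    have hsPns : nonSingleton (s '' P) := by
      intro hsing
      rw [height_singleton hsing] at hheq
      omega
    refine ⟨?_, hsub⟩
    by_contra hPQ
    have hmem : height S (s '' P) ∈ HSet S (s '' P) :=
      Nat.sSup_mem ⟨1, one_mem_hset h1 hsPns⟩ (hset_bdd hS (s '' P))
    have : height S (s '' P) + 1 ∈ HSet S P :=
      succ_mem_hset hP hPns hsub hPQ hmem
    have := le_csSup (hset_bdd hS P) this
    rw [← height_eq] at this
    omega


end Holonomy
end
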